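/- Define h_nf : ℝ⁴ → ℝ by h_nf(x, z, p, q) = 300·x·p + (1−x)·(100·(1/2 − q) + (1/2)·(100·z·(1−p) + 100·(1−z)·q)). Then the supremum over (x, z) ∈ [0,1] × [0,1] of the infimum over (p, q) ∈ [1/10, 2/5] × [1/10, 2/5] of h_nf(x, z, p, q) equals 360/7 (i.e., 51 and 3/7). -/
import Mathlib


noncomputable def hNf (x z p q : ℝ) : ℝ :=
  300 * x * p + (1 - x) * (100 * (1/2 - q)
    + (1/2) * (100 * z * (1 - p) + 100 * (1 - z) * q))

theorem natureFirst_aRect_optimal_value :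
    sSup {v : ℝ | ∃ x ∈ Set.Icc (0 : ℝ) 1, ∃ z ∈ Set.Icc (0 : ℝ) 1,
        v = sInf {w : ℝ | ∃ p ∈ Set.Icc (1/10 : ℝ) (2/5), ∃ q ∈ Set.Icc (1/10 : ℝ) (2/5),
          w = hNf x z p q}} = 360 / 7 := by
  have hbdd : ∀ x z : ℝ, x ∈ Set.Icc (0:ℝ) 1 → z ∈ Set.Icc (0:ℝ) 1 →
      BddBelow {w : ℝ | ∃ p ∈ Set.Icc (1/10 : ℝ) (2/5), ∃ q ∈ Set.Icc (1/10 : ℝ) (2/5),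
          w = hNf x z p q} := by
    intro x z hx hz
    refine ⟨0, ?_⟩
    rintro w ⟨p, hp, q, hq, rfl⟩
    obtain ⟨hx0, hx1⟩ := hx; obtain ⟨hz0, hz1⟩ := hz
    obtain ⟨hp0, hp1⟩ := hp; obtain ⟨hq0, hq1⟩ := hq
    have hp0' : (0:ℝ) ≤ p := by linarith
    have hq0' : (0:ℝ) ≤ q := by linarith
    unfold hNf
    nlinarith [mul_nonneg hx0 hp0', mul_nonneg (sub_nonneg.2 hx1) (sub_nonneg.2 hz1),
      mul_nonneg (mul_nonneg (sub_nonneg.2 hx1) hz0) (sub_nonneg.2 hp1),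
      mul_nonneg (mul_nonneg (sub_nonneg.2 hx1) (sub_nonneg.2 hz1)) hq0',
      mul_nonneg (sub_nonneg.2 hx1) (sub_nonneg.2 hq1)]
  apply le_antisymm
  · apply csSup_le
    · exact ⟨sInf {w : ℝ | ∃ p ∈ Set.Icc (1/10 : ℝ) (2/5), ∃ q ∈ Set.Icc (1/10 : ℝ) (2/5),
          w = hNf 0 0 p q}, 0, ⟨le_refl 0, zero_le_one⟩, 0, ⟨le_refl 0, zero_le_one⟩, rfl⟩
    · rintro v ⟨x, hx, z, hz, rfl⟩
      have h1 : sInf {w : ℝ | ∃ p ∈ Set.Icc (1/10 : ℝ) (2/5), ∃ q ∈ Set.Icc (1/10 : ℝ) (2/5),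
          w = hNf x z p q} ≤ hNf x z (1/10) (2/5) := by
        apply csInf_le (hbdd x z hx hz)
        exact ⟨1/10, ⟨le_refl _, by norm_num⟩, 2/5, ⟨by norm_num, le_refl _⟩, rfl⟩
      have h2 : sInf {w : ℝ | ∃ p ∈ Set.Icc (1/10 : ℝ) (2/5), ∃ q ∈ Set.Icc (1/10 : ℝ) (2/5),
          w = hNf x z p q} ≤ hNf x z (2/5) (2/5) := by
        apply csInf_le (hbdd x z hx hz)
        exact ⟨2/5, ⟨by norm_num, le_refl _⟩, 2/5, ⟨by norm_num, le_refl _⟩, rfl⟩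
      obtain ⟨hx0, hx1⟩ := hx; obtain ⟨hz0, hz1⟩ := hz
      have key : hNf x z (1/10) (2/5) * 16 + hNf x z (2/5) (2/5) * 5 ≤ 1080 := by
        unfold hNf
        nlinarith [mul_nonneg (sub_nonneg.2 hx1) (sub_nonneg.2 hz1)]
      linarith
  · have hval : sInf {w : ℝ | ∃ p ∈ Set.Icc (1/10 : ℝ) (2/5), ∃ q ∈ Set.Icc (1/10 : ℝ) (2/5),
        w = hNf (1/7) 1 p q} = 360 / 7 := by
      apply le_antisymm
      · apply csInf_le (hbdd (1/7) 1 (by norm_num) (by norm_num))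
        refine ⟨1/10, ⟨le_refl _, by norm_num⟩, 2/5, ⟨by norm_num, le_refl _⟩, ?_⟩
        unfold hNf; norm_num
      · apply le_csInf
        · exact ⟨hNf (1/7) 1 (1/10) (1/10), 1/10, ⟨le_refl _, by norm_num⟩,
            1/10, ⟨le_refl _, by norm_num⟩, rfl⟩
        · rintro w ⟨p, hp, q, hq, rfl⟩
          obtain ⟨hq0, hq1⟩ := hq
          unfold hNf
          nlinarith
    rw [← hval]
    apply le_csSup
    · refine ⟨360/7, ?_⟩
      rintro v ⟨x, hx, z, hz, rfl⟩
      have h1 : sInf {w : ℝ | ∃ p ∈ Set.Icc (1/10 : ℝ) (2/5), ∃ q ∈ Set.Icc (1/10 : ℝ) (2/5),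
          w = hNf x z p q} ≤ hNf x z (1/10) (2/5) := by
        apply csInf_le (hbdd x z hx hz)
        exact ⟨1/10, ⟨le_refl _, by norm_num⟩, 2/5, ⟨by norm_num, le_refl _⟩, rfl⟩
      have h2 : sInf {w : ℝ | ∃ p ∈ Set.Icc (1/10 : ℝ) (2/5), ∃ q ∈ Set.Icc (1/10 : ℝ) (2/5),
          w = hNf x z p q} ≤ hNf x z (2/5) (2/5) := by
        apply csInf_le (hbdd x z hx hz)
        exact ⟨2/5, ⟨by norm_num, le_refl _⟩, 2/5, ⟨by norm_num, le_refl _⟩, rfl⟩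
      obtain ⟨hx0, hx1⟩ := hx; obtain ⟨hz0, hz1⟩ := hz
      have key : hNf x z (1/10) (2/5) * 16 + hNf x z (2/5) (2/5) * 5 ≤ 1080 := by
        unfold hNf
        nlinarith [mul_nonneg (sub_nonneg.2 hx1) (sub_nonneg.2 hz1)]
      linarith
    · exact ⟨1/7, ⟨by norm_num, by norm_num⟩, 1, ⟨zero_le_one, le_refl 1⟩, rfl⟩
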